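/- Let A ⊆ ℝ^N and Ω ⊆ ℝ^N with |Ω| < ∞ and Ω ⊆ A_δ for some δ > 0, and define the relative distance zeta function ζ_A(s, Ω) := ∫_Ω d(x,A)^{s-N} dx. Then for every λ > 0 and every s ∈ ℂ with Re(s) > dim_B̄(A, Ω), one has ζ_{λA}(s, λΩ) = λ^s ζ_A(s, Ω). -/

import Mathlib

/-! The substitution `x = l • y` multiplies Lebesgue measure by `l ^ N`, and distances to `l • A`
are `l` times distances to `A`, so the integrand picks up the factor `l ^ (s - N)`. -/

open MeasureTheory Metric Filter Set Topology

/-- The relative upper `r`-dimensional Minkowski content of `(A, Ω)` in `ℝ^N`: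
`limsup_{t→0+} |A_t ∩ Ω| / t^(N-r)`. -/
noncomputable def relUpperMinkowskiContent (N : ℕ) (A Ω : Set (EuclideanSpace ℝ (Fin N)))
    (r : ℝ) : ENNReal :=
  Filter.limsup
    (fun t : ℝ =>
      volume (Metric.thickening t A ∩ Ω) / ENNReal.ofReal (t ^ ((N : ℝ) - r)))
    (nhdsWithin 0 (Set.Ioi 0))

/-- The relative upper box (Minkowski) dimension of `(A, Ω)`. -/
noncomputable def relUpperBoxDim (N : ℕ) (A Ω : Set (EuclideanSpace ℝ (Fin N))) : ℝ :=
  sInf {r : ℝ | relUpperMinkowskiContent N A Ω r = 0}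

open Module
open scoped Pointwise

section

variable {E : Type*} [NormedAddCommGroup E] [NormedSpace ℝ E]

theorem infDist_smul_cpow_of_pos (A : Set E) {l : ℝ} (hl : 0 < l) (z : ℂ) (x : E) :
    (infDist (l • x) (l • A) : ℂ) ^ z = (l : ℂ) ^ z * (infDist x A : ℂ) ^ z := by
  rw [infDist_smul₀ hl.ne', Real.norm_of_nonneg hl.le, Complex.ofReal_mul,
    Complex.mul_cpow_ofReal_nonneg hl.le infDist_nonneg]

variable [MeasurableSpace E] [BorelSpace E] [FiniteDimensional ℝ E]
  (μ : Measure E) [μ.IsAddHaarMeasure]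

theorem setIntegral_smul_infDist_smul_cpow (A Ω : Set E) {l : ℝ} (hl : 0 < l) (z : ℂ) :
    ∫ x in l • Ω, (infDist x (l • A) : ℂ) ^ z ∂μ
      = (l : ℂ) ^ ((finrank ℝ E : ℂ) + z) * ∫ x in Ω, (infDist x A : ℂ) ^ z ∂μ := by
  have hl' : (l : ℂ) ≠ 0 := Complex.ofReal_ne_zero.mpr hl.ne'
  have h := Measure.setIntegral_comp_smul_of_pos μ (fun x => (infDist x (l • A) : ℂ) ^ z) Ω hl
  simp only [infDist_smul_cpow_of_pos A hl, integral_const_mul] at h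
  rw [Complex.cpow_add _ _ hl', Complex.cpow_natCast, mul_assoc, h, Complex.real_smul]
  push_cast
  field_simp

end

theorem stmt_3_general (N : ℕ) (A Ω : Set (EuclideanSpace ℝ (Fin N)))
    (l : ℝ) (hl : 0 < l) (s : ℂ) :
    (∫ x in (fun y => l • y) '' Ω,
        (Metric.infDist x ((fun y => l • y) '' A) : ℂ) ^ (s - (N : ℂ)))
      = (l : ℂ) ^ s * ∫ x in Ω, (Metric.infDist x A : ℂ) ^ (s - (N : ℂ)) := by
  have h := setIntegral_smul_infDist_smul_cpow volume A Ω hl (s - N)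
  -- `l • Ω` and `l • A` unfold to the images `(fun y => l • y) '' _` of the goal.
  rwa [finrank_euclideanSpace_fin, add_sub_cancel] at h

/-- Scaling property of the relative distance zeta function:
`ζ_{λA}(s, λΩ) = λ^s ζ_A(s, Ω)` for `Re s > dim_B̄(A, Ω)`. -/
theorem stmt_3 (N : ℕ) (A Ω : Set (EuclideanSpace ℝ (Fin N)))
    (hΩvol : volume Ω < ⊤) (δ : ℝ) (hδ : 0 < δ) (hsub : Ω ⊆ Metric.thickening δ A)
    (l : ℝ) (hl : 0 < l) (s : ℂ) (hs : relUpperBoxDim N A Ω < s.re) :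
    (∫ x in (fun y => l • y) '' Ω,
        (Metric.infDist x ((fun y => l • y) '' A) : ℂ) ^ (s - (N : ℂ)))
      = (l : ℂ) ^ s * ∫ x in Ω, (Metric.infDist x A : ℂ) ^ (s - (N : ℂ)) :=
  stmt_3_general N A Ω l hl s
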